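/- arXiv:1906.10259 — 2 statements merged into one kernel-verified Lean document; each statement's English description precedes it below -/
import Mathlib

section
/- For each proper nonempty subset S ⊊ {0,...,n}, the vector e(S) with e(S)_i = n+1−|S| for i ∈ S and e(S)_i = −|S| for i ∉ S is an edge vector: its coordinates sum to 0, all pairwise coordinate differences are divisible by n+1, and max e(S) − min e(S) = n+1. Conversely, every edge vector is of this form for a unique proper nonempty subset S. -/
/-!
An edge vector `e` with minimum `m` takes only the values `m` and `m + (n+1)`: every `e i - m`
is a multiple of `n+1` lying in `[0, n+1]`. With `S` the set where the maximum is attained,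
`∑ e = (n+1)(m + |S|)`, so `m = -|S|` and `e = e(S)`. Conversely `e(S)` has these two values,
both attained when `S` is proper and nonempty, and `S` is recovered as the set where `e(S) > 0`.
-/

open Finset

/-- The vertex set of the 1-skeleton of the Ã_n Coxeter complex:
integer vectors summing to zero with all pairwise coordinate differences divisible by n+1. -/
def inV (n : ℕ) (x : Fin (n+1) → ℤ) : Prop :=
  (∑ i, x i = 0) ∧ ∀ i j, ((n : ℤ) + 1) ∣ x i - x j

/-- Maximum coordinate. -/
def maxC (n : ℕ) (x : Fin (n+1) → ℤ) : ℤ := univ.sup' univ_nonempty x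

/-- Minimum coordinate. -/
def minC (n : ℕ) (x : Fin (n+1) → ℤ) : ℤ := univ.inf' univ_nonempty x

/-- An edge vector: coordinates sum to 0, pairwise differences divisible by n+1,
and max minus min equals n+1. -/
def isEdge (n : ℕ) (e : Fin (n+1) → ℤ) : Prop :=
  inV n e ∧ maxC n e - minC n e = (n : ℤ) + 1

/-- Height of a vertex: (max − min)/(n+1). -/
def height (n : ℕ) (x : Fin (n+1) → ℤ) : ℤ :=
  (maxC n x - minC n x) / ((n : ℤ) + 1)

/-- The edge vector associated to a subset S: value n+1−|S| on S and −|S| off S. -/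
def eVec (n : ℕ) (S : Finset (Fin (n+1))) : Fin (n+1) → ℤ :=
  fun i => if i ∈ S then (n : ℤ) + 1 - S.card else -(S.card : ℤ)

lemma inV_zero (n : ℕ) : inV n 0 := ⟨by simp, fun i j => by simp⟩

lemma maxC_neg (n : ℕ) (x : Fin (n+1) → ℤ) : maxC n (-x) = - minC n x := by
  unfold maxC minC
  apply le_antisymm
  · apply Finset.sup'_le
    intro i hi
    have h1 : univ.inf' univ_nonempty x ≤ x i := Finset.inf'_le _ hi
    have h2 : (-x) i = -(x i) := rfl
    omega
  · obtain ⟨i, hi, h⟩ := Finset.exists_mem_eq_inf' (univ_nonempty) x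
    rw [h]
    have h1 : (-x) i ≤ univ.sup' univ_nonempty (-x) := Finset.le_sup' (-x) hi
    have h2 : (-x) i = -(x i) := rfl
    omega

lemma minC_neg (n : ℕ) (x : Fin (n+1) → ℤ) : minC n (-x) = - maxC n x := by
  have := maxC_neg n (-x)
  rw [neg_neg] at this
  unfold maxC minC at *
  omega

lemma isEdge_neg {n : ℕ} {e : Fin (n+1) → ℤ} (h : isEdge n e) : isEdge n (-e) := by
  obtain ⟨⟨h1, h2⟩, h3⟩ := h
  refine ⟨⟨by simp [h1], fun i j => by
    have h' : (-e) i - (-e) j = e j - e i := by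
      simp only [Pi.neg_apply]; ring
    rw [h']; exact h2 j i⟩, ?_⟩
  rw [maxC_neg, minC_neg]
  omega

/-- The graph G on V with edge-vector adjacency. -/
def G (n : ℕ) : SimpleGraph {x : Fin (n+1) → ℤ // inV n x} where
  Adj x y := isEdge n (y.1 - x.1)
  symm := by
    constructor
    intro x y h
    have := isEdge_neg h
    rwa [neg_sub] at this
  loopless := by
    constructor
    intro x h
    obtain ⟨-, h3⟩ := h
    rw [sub_self] at h3
    simp [maxC, minC] at h3
    omega

section EdgeVectors

variable {n : ℕ}

lemma le_maxC (x : Fin (n+1) → ℤ) (i : Fin (n+1)) : x i ≤ maxC n x :=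
  le_sup' x (mem_univ i)

lemma minC_le (x : Fin (n+1) → ℤ) (i : Fin (n+1)) : minC n x ≤ x i :=
  inf'_le x (mem_univ i)

lemma exists_eq_maxC (x : Fin (n+1) → ℤ) : ∃ i, x i = maxC n x :=
  let ⟨i, _, hi⟩ := exists_mem_eq_sup' univ_nonempty x
  ⟨i, hi.symm⟩

lemma exists_eq_minC (x : Fin (n+1) → ℤ) : ∃ i, x i = minC n x :=
  let ⟨i, _, hi⟩ := exists_mem_eq_inf' univ_nonempty x
  ⟨i, hi.symm⟩

lemma maxC_eq {x : Fin (n+1) → ℤ} {a : ℤ} (hle : ∀ i, x i ≤ a) (i : Fin (n+1)) (hi : x i = a) :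
    maxC n x = a :=
  le_antisymm (sup'_le _ _ fun j _ => hle j) (hi ▸ le_maxC x i)

lemma minC_eq {x : Fin (n+1) → ℤ} {a : ℤ} (hle : ∀ i, a ≤ x i) (i : Fin (n+1)) (hi : x i = a) :
    minC n x = a :=
  le_antisymm (hi ▸ minC_le x i) (le_inf' _ _ fun j _ => hle j)

lemma eVec_apply (S : Finset (Fin (n+1))) (i : Fin (n+1)) :
    eVec n S i = -S.card + if i ∈ S then (n : ℤ) + 1 else 0 := by
  unfold eVec
  split_ifs <;> ring

lemma sum_add_ite_mem (S : Finset (Fin (n+1))) (m : ℤ) :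
    ∑ i, (m + if i ∈ S then (n : ℤ) + 1 else 0) = ((n : ℤ) + 1) * (m + S.card) := by
  rw [sum_add_distrib, Fintype.sum_ite_mem, sum_const, sum_const, card_univ, Fintype.card_fin]
  simp only [nsmul_eq_mul, Nat.cast_add, Nat.cast_one]
  ring

lemma sum_eVec (S : Finset (Fin (n+1))) : ∑ i, eVec n S i = 0 := by
  simp only [eVec_apply, sum_add_ite_mem, neg_add_cancel, mul_zero]

lemma dvd_eVec_sub (S : Finset (Fin (n+1))) (i j : Fin (n+1)) :
    ((n : ℤ) + 1) ∣ eVec n S i - eVec n S j := by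
  have h : eVec n S i - eVec n S j =
      ((n : ℤ) + 1) * ((if i ∈ S then 1 else 0) - if j ∈ S then 1 else 0) := by
    simp only [eVec_apply]
    split_ifs <;> ring
  exact h ▸ dvd_mul_right _ _

lemma inV_eVec (S : Finset (Fin (n+1))) : inV n (eVec n S) :=
  ⟨sum_eVec S, dvd_eVec_sub S⟩

lemma maxC_eVec {S : Finset (Fin (n+1))} (hS : S.Nonempty) :
    maxC n (eVec n S) = (n : ℤ) + 1 - S.card := by
  obtain ⟨i, hi⟩ := hS
  refine maxC_eq (fun j => ?_) i (by simp [eVec, hi])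
  unfold eVec
  split_ifs <;> omega

lemma minC_eVec {S : Finset (Fin (n+1))} (hS : S ≠ univ) : minC n (eVec n S) = -S.card := by
  obtain ⟨i, hi⟩ := not_forall.1 (mt eq_univ_iff_forall.2 hS)
  have hcard : S.card < n + 1 := by simpa using (card_lt_iff_ne_univ S).2 hS
  refine minC_eq (fun j => ?_) i (by simp [eVec, hi])
  unfold eVec
  split_ifs <;> omega

lemma isEdge_eVec {S : Finset (Fin (n+1))} (hS : S.Nonempty) (hSu : S ≠ univ) :
    isEdge n (eVec n S) :=
  ⟨inV_eVec S, by rw [maxC_eVec hS, minC_eVec hSu]; ring⟩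

lemma mem_iff_eVec_pos {S : Finset (Fin (n+1))} (hS : S ≠ univ) (i : Fin (n+1)) :
    i ∈ S ↔ 0 < eVec n S i := by
  have hcard : S.card < n + 1 := by simpa using (card_lt_iff_ne_univ S).2 hS
  unfold eVec
  split_ifs with hi <;> simp only [hi, true_iff, false_iff, not_lt] <;> omega

lemma eq_of_eVec_eq {S T : Finset (Fin (n+1))} (hS : S ≠ univ) (hT : T ≠ univ)
    (h : eVec n S = eVec n T) : S = T := by
  ext i
  rw [mem_iff_eVec_pos hS, mem_iff_eVec_pos hT, h]

lemma eq_minC_or_eq_maxC {e : Fin (n+1) → ℤ} (he : isEdge n e) (i : Fin (n+1)) :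
    e i = minC n e ∨ e i = maxC n e := by
  obtain ⟨⟨-, hdvd⟩, hwidth⟩ := he
  obtain ⟨j, hj⟩ := exists_eq_minC e
  by_cases hmax : e i = maxC n e
  · exact Or.inr hmax
  · have hlt : e i - minC n e < (n : ℤ) + 1 := by
      have := le_maxC e i
      omega
    have := Int.eq_zero_of_dvd_of_nonneg_of_lt (by linarith [minC_le e i]) hlt (hj ▸ hdvd i j)
    exact Or.inl (by linarith)

lemma eq_eVec_of_eq_add_ite {e : Fin (n+1) → ℤ} {S : Finset (Fin (n+1))} {m : ℤ}
    (hsum : ∑ i, e i = 0) (he : ∀ i, e i = m + if i ∈ S then (n : ℤ) + 1 else 0) :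
    e = eVec n S := by
  have hm : m = -S.card := by
    simp only [he, sum_add_ite_mem, mul_eq_zero] at hsum
    omega
  funext i
  rw [he, eVec_apply, hm]

lemma exists_eq_eVec_of_isEdge {e : Fin (n+1) → ℤ} (he : isEdge n e) :
    ∃ S : Finset (Fin (n+1)), S.Nonempty ∧ S ≠ univ ∧ e = eVec n S := by
  let S := univ.filter fun i => e i = maxC n e
  have hmem (i : Fin (n+1)) : i ∈ S ↔ e i = maxC n e := by simp [S]
  obtain ⟨imax, himax⟩ := exists_eq_maxC e
  obtain ⟨imin, himin⟩ := exists_eq_minC e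
  have hwidth := he.2
  refine ⟨S, ⟨imax, (hmem imax).2 himax⟩,
    fun h => by have := (hmem imin).1 (h ▸ mem_univ imin); omega,
    eq_eVec_of_eq_add_ite he.1.1 (m := minC n e) fun i => ?_⟩
  rcases eq_minC_or_eq_maxC he i with h | h
  · rw [if_neg (by rw [hmem]; omega)]
    omega
  · rw [if_pos ((hmem i).2 h)]
    omega

end EdgeVectors

theorem stmt3_general (n : ℕ) :
    (∀ S : Finset (Fin (n+1)), S.Nonempty → S ≠ univ → isEdge n (eVec n S)) ∧
    (∀ e : Fin (n+1) → ℤ, isEdge n e →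
      ∃! S : Finset (Fin (n+1)), S.Nonempty ∧ S ≠ univ ∧ e = eVec n S) := by
  refine ⟨fun S hS hSu => isEdge_eVec hS hSu, fun e he => ?_⟩
  obtain ⟨S, hS, hSu, rfl⟩ := exists_eq_eVec_of_isEdge he
  exact ⟨S, ⟨hS, hSu, rfl⟩, fun T ⟨_, hTu, hT⟩ => eq_of_eVec_eq hTu hSu hT.symm⟩

/-- for every proper nonempty S, e(S) is an edge vector, and every edge
vector is e(S) for a unique proper nonempty S. -/
theorem stmt3 (n : ℕ) (hn : 1 ≤ n) :
    (∀ S : Finset (Fin (n+1)), S.Nonempty → S ≠ univ → isEdge n (eVec n S)) ∧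
    (∀ e : Fin (n+1) → ℤ, isEdge n e →
      ∃! S : Finset (Fin (n+1)), S.Nonempty ∧ S ≠ univ ∧ e = eVec n S) :=
  stmt3_general n
end

section
/- Let x ∈ V and S ⊊ {0,...,n} be proper and nonempty, and let e(S) be the associated edge vector. Then h(x + e(S)) = h(x) − 1 if and only if S contains all coordinates where x attains its minimum and none where x attains its maximum, provided h(x) ≥ 1. -/
open Finset

/-!
Write `N = n + 1`. Since `e(S)` equals `N` on `S` minus the constant `|S|`, and the height only
sees differences of coordinates, `x + e(S)` has the same height as the vector obtained from `x`
by raising the coordinates in `S` by `N`. All coordinates of `x` are congruent mod `N`, so a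
non-maximal coordinate lies at least `N` below the maximum and a non-minimal one at least `N`
above the minimum. Hence if `S` contains every minimal and no maximal coordinate, the maximum
stays and the minimum rises by `N`, so the height drops by one. Otherwise either a minimal
coordinate stays put or a maximal one rises by `N`; in both cases the spread `max - min` does
not shrink and neither does the height.
-/

variable {n : ℕ}

lemma maxC_le {x : Fin (n+1) → ℤ} {a : ℤ} (h : ∀ i, x i ≤ a) : maxC n x ≤ a :=
  sup'_le _ _ fun i _ => h i

lemma le_minC {x : Fin (n+1) → ℤ} {a : ℤ} (h : ∀ i, a ≤ x i) : a ≤ minC n x :=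
  le_inf' _ _ fun i _ => h i

lemma maxC_sub_const (x : Fin (n+1) → ℤ) (c : ℤ) :
    maxC n (fun i => x i - c) = maxC n x - c := by
  obtain ⟨i, hi⟩ := exists_eq_maxC x
  refine le_antisymm (maxC_le fun j => ?_) ?_
  · linarith [le_maxC x j]
  · linarith [le_maxC (fun j => x j - c) i]

lemma minC_sub_const (x : Fin (n+1) → ℤ) (c : ℤ) :
    minC n (fun i => x i - c) = minC n x - c := by
  obtain ⟨i, hi⟩ := exists_eq_minC x
  refine le_antisymm ?_ (le_minC fun j => ?_)
  · linarith [minC_le (fun j => x j - c) i]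
  · linarith [minC_le x j]

lemma height_sub_const (x : Fin (n+1) → ℤ) (c : ℤ) :
    height n (fun i => x i - c) = height n x := by
  rw [height, height, maxC_sub_const, minC_sub_const, sub_sub_sub_cancel_right]

lemma add_le_maxC_of_ne {x : Fin (n+1) → ℤ} (hx : ∀ i j, ((n : ℤ) + 1) ∣ x i - x j)
    {i : Fin (n+1)} (hi : x i ≠ maxC n x) : x i + (n + 1) ≤ maxC n x := by
  obtain ⟨j, hj⟩ := exists_eq_maxC x
  have hlt : x i < x j := hj ▸ lt_of_le_of_ne (le_maxC x i) hi
  linarith [Int.le_of_dvd (sub_pos.mpr hlt) (hx j i)]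

lemma minC_add_le_of_ne {x : Fin (n+1) → ℤ} (hx : ∀ i j, ((n : ℤ) + 1) ∣ x i - x j)
    {i : Fin (n+1)} (hi : x i ≠ minC n x) : minC n x + (n + 1) ≤ x i := by
  obtain ⟨j, hj⟩ := exists_eq_minC x
  have hlt : x j < x i := hj ▸ lt_of_le_of_ne (minC_le x i) (Ne.symm hi)
  linarith [Int.le_of_dvd (sub_pos.mpr hlt) (hx i j)]

/-- Moves the coordinates in `S` one rung up the ladder: this is `x + e(S)` without the
recentring by `-|S|`. -/
def raise (n : ℕ) (x : Fin (n+1) → ℤ) (S : Finset (Fin (n+1))) : Fin (n+1) → ℤ :=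
  fun i => if i ∈ S then x i + (n + 1) else x i

lemma add_eVec (x : Fin (n+1) → ℤ) (S : Finset (Fin (n+1))) :
    x + eVec n S = fun i => raise n x S i - S.card := by
  funext i
  simp only [Pi.add_apply, eVec, raise]
  split_ifs <;> ring

section raise

variable (x : Fin (n+1) → ℤ) (S : Finset (Fin (n+1)))

lemma raise_of_mem {i : Fin (n+1)} (hi : i ∈ S) : raise n x S i = x i + (n + 1) := if_pos hi

lemma raise_of_notMem {i : Fin (n+1)} (hi : i ∉ S) : raise n x S i = x i := if_neg hi

lemma le_raise (i : Fin (n+1)) : x i ≤ raise n x S i := by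
  unfold raise; split_ifs <;> omega

lemma raise_le (i : Fin (n+1)) : raise n x S i ≤ x i + (n + 1) := by
  unfold raise; split_ifs <;> omega

variable {x S}

lemma maxC_raise (hx : ∀ i j, ((n : ℤ) + 1) ∣ x i - x j)
    (hmax : ∀ i, x i = maxC n x → i ∉ S) : maxC n (raise n x S) = maxC n x := by
  obtain ⟨i, hi⟩ := exists_eq_maxC x
  refine le_antisymm (maxC_le fun j => ?_) ?_
  · by_cases hj : j ∈ S
    · rw [raise_of_mem x S hj]
      exact add_le_maxC_of_ne hx fun h => hmax j h hj
    · rw [raise_of_notMem x S hj]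
      exact le_maxC x j
  · calc maxC n x = raise n x S i := by rw [raise_of_notMem x S (hmax i hi), hi]
      _ ≤ maxC n (raise n x S) := le_maxC _ i

lemma minC_raise (hx : ∀ i j, ((n : ℤ) + 1) ∣ x i - x j)
    (hmin : ∀ i, x i = minC n x → i ∈ S) : minC n (raise n x S) = minC n x + (n + 1) := by
  obtain ⟨i, hi⟩ := exists_eq_minC x
  refine le_antisymm ?_ (le_minC fun j => ?_)
  · calc minC n (raise n x S) ≤ raise n x S i := minC_le _ i
      _ = minC n x + (n + 1) := by rw [raise_of_mem x S (hmin i hi), hi]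
  · by_cases hj : j ∈ S
    · rw [raise_of_mem x S hj]
      linarith [minC_le x j]
    · rw [raise_of_notMem x S hj]
      exact minC_add_le_of_ne hx fun h => hj (hmin j h)

lemma height_raise (hx : ∀ i j, ((n : ℤ) + 1) ∣ x i - x j)
    (hmin : ∀ i, x i = minC n x → i ∈ S) (hmax : ∀ i, x i = maxC n x → i ∉ S) :
    height n (raise n x S) = height n x - 1 := by
  have hN : ((n : ℤ) + 1) ≠ 0 := by positivity
  rw [height, maxC_raise hx hmax, minC_raise hx hmin,
    show maxC n x - (minC n x + (n + 1)) = maxC n x - minC n x + (-1) * (n + 1) by ring,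
    Int.add_mul_ediv_right _ _ hN, height, Int.add_neg_one]

lemma height_le_height_raise
    (h : (∃ i, x i = minC n x ∧ i ∉ S) ∨ ∃ i, x i = maxC n x ∧ i ∈ S) :
    height n x ≤ height n (raise n x S) := by
  refine Int.ediv_le_ediv (by positivity) ?_
  rcases h with ⟨i, hi, hiS⟩ | ⟨i, hi, hiS⟩
  · have hmax : maxC n x ≤ maxC n (raise n x S) :=
      maxC_le fun j => (le_raise x S j).trans (le_maxC _ j)
    have hmin : minC n (raise n x S) ≤ minC n x :=
      (minC_le _ i).trans_eq (by rw [raise_of_notMem x S hiS, hi])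
    omega
  · have hmax : maxC n x + (n + 1) ≤ maxC n (raise n x S) :=
      (le_maxC _ i).trans_eq' (by rw [raise_of_mem x S hiS, hi])
    obtain ⟨j, hj⟩ := exists_eq_minC x
    have hmin : minC n (raise n x S) ≤ minC n x + (n + 1) :=
      (minC_le _ j).trans (hj ▸ raise_le x S j)
    omega

end raise

theorem stmt7_general (n : ℕ) (x : Fin (n+1) → ℤ) (hx : inV n x)
    (S : Finset (Fin (n+1))) :
    height n (x + eVec n S) = height n x - 1 ↔
      ((∀ i, x i = minC n x → i ∈ S) ∧ (∀ i, x i = maxC n x → i ∉ S)) := by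
  rw [add_eVec, height_sub_const]
  constructor
  · intro h
    by_contra hc
    have := height_le_height_raise (x := x) (S := S)
      (by simpa only [not_and_or, not_forall, not_not, exists_prop] using hc)
    omega
  · rintro ⟨hmin, hmax⟩
    exact height_raise hx.2 hmin hmax

/-- for h(x) ≥ 1, adding e(S) decreases height iff S contains all
minimal coordinates and no maximal coordinate. -/
theorem stmt7 (n : ℕ) (hn : 1 ≤ n) (x : Fin (n+1) → ℤ) (hx : inV n x)
    (S : Finset (Fin (n+1))) (hS : S.Nonempty) (hS' : S ≠ univ)
    (hht : 1 ≤ height n x) :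
    height n (x + eVec n S) = height n x - 1 ↔
      ((∀ i, x i = minC n x → i ∈ S) ∧ (∀ i, x i = maxC n x → i ∉ S)) :=
  stmt7_general n x hx S
end
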